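/- Let E be a sharply orthocomplete lattice effect algebra. Then E is sharply dominating (hence S-dominating and centrally dominating), and S(E) is a complete orthomodular lattice bifull in E. -/

import Mathlib

universe u v

/-- An effect algebra: a partial algebra `(E; ⊕, 0, 1)` with `0 ≠ 1`, where `⊕` is
partially defined (domain `D`), commutative and associative where defined, every
element has a unique orthosupplement (`compl`, skolemizing axiom (Eiii)), and
`1 ⊕ x` defined implies `x = 0`. -/
structure EffectAlgebra (E : Type u) where
  D : E → E → Prop
  oplus : E → E → E
  zero : E
  one : E
  zero_ne_one : zero ≠ one
  D_comm : ∀ x y, D x y → D y x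
  oplus_comm : ∀ x y, D x y → oplus x y = oplus y x
  assoc : ∀ x y z, D x y → D (oplus x y) z →
      D y z ∧ D x (oplus y z) ∧ oplus (oplus x y) z = oplus x (oplus y z)
  assoc' : ∀ x y z, D y z → D x (oplus y z) →
      D x y ∧ D (oplus x y) z ∧ oplus (oplus x y) z = oplus x (oplus y z)
  compl : E → E
  D_compl : ∀ x, D x (compl x)
  oplus_compl : ∀ x, oplus x (compl x) = one
  compl_unique : ∀ x y, D x y → oplus x y = one → y = compl x
  one_max : ∀ x, D one x → x = zero

namespace EffectAlgebra

variable {E : Type u} (A : EffectAlgebra E)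

/-- The induced order: `x ≤ y` iff `x ⊕ z = y` for some `z`. -/
def le (x y : E) : Prop := ∃ z, A.D x z ∧ A.oplus x z = y

def IsLB (S : Set E) (m : E) : Prop := ∀ x ∈ S, A.le m x
def IsUB (S : Set E) (m : E) : Prop := ∀ x ∈ S, A.le x m

/-- `m` is the infimum of `S` computed within the subposet `P`. -/
def IsInfIn (P : Set E) (S : Set E) (m : E) : Prop :=
  m ∈ P ∧ A.IsLB S m ∧ ∀ z ∈ P, A.IsLB S z → A.le z m

/-- `m` is the supremum of `S` computed within the subposet `P`. -/
def IsSupIn (P : Set E) (S : Set E) (m : E) : Prop :=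
  m ∈ P ∧ A.IsUB S m ∧ ∀ z ∈ P, A.IsUB S z → A.le m z

/-- `w` is sharp iff the meet `w ∧ w'` exists in `E` and equals `0`. -/
def Sharp (w : E) : Prop := A.IsInfIn Set.univ {w, A.compl w} A.zero

/-- The set `S(E)` of sharp elements. -/
def sharpSet : Set E := {w | A.Sharp w}

def HasMeet (x y : E) : Prop := ∃ m, A.IsInfIn Set.univ {x, y} m
def HasJoin (x y : E) : Prop := ∃ j, A.IsSupIn Set.univ {x, y} j

/-- Every `x` has a least sharp element above it, which is the infimum of the sharp
elements above `x` both in `E` and in `S(E)`. -/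
def SharplyDominating : Prop :=
  ∀ x : E, ∃ w, A.Sharp w ∧ A.le x w ∧
    A.IsInfIn Set.univ {v | A.Sharp v ∧ A.le x v} w ∧
    A.IsInfIn A.sharpSet {v | A.Sharp v ∧ A.le x v} w

/-- Sharply dominating, and `x ∧ w` exists for every `x ∈ E`, `w ∈ S(E)`. -/
def SDominating : Prop :=
  A.SharplyDominating ∧ ∀ x w : E, A.Sharp w → A.HasMeet x w

end EffectAlgebra

/-- `SumDef A l s` : the orthosum of the finite list `l` is defined and equals `s`. -/
inductive EffectAlgebra.SumDef {E : Type u} (A : EffectAlgebra E) : List E → E → Prop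
  | nil : EffectAlgebra.SumDef A [] A.zero
  | cons {x : E} {l : List E} {s : E} : EffectAlgebra.SumDef A l s → A.D x s →
      EffectAlgebra.SumDef A (x :: l) (A.oplus x s)

namespace EffectAlgebra

variable {E : Type u} (A : EffectAlgebra E)

/-- A family is orthogonal iff every finite subfamily has a defined orthosum. -/
def Orthogonal {ι : Type v} (x : ι → E) : Prop :=
  ∀ l : List ι, l.Nodup → ∃ s, A.SumDef (l.map x) s

/-- The set of finite partial orthosums of a family. -/
def finiteSums {ι : Type v} (x : ι → E) : Set E :=
  {s | ∃ l : List ι, l.Nodup ∧ A.SumDef (l.map x) s}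

/-- `v = ⊕ x` : the family is orthogonal and `v` is the supremum in `E` of all
finite partial orthosums. -/
def HasOrthoSum {ι : Type v} (x : ι → E) (v : E) : Prop :=
  A.Orthogonal x ∧ A.IsSupIn Set.univ (A.finiteSums x) v

/-- Every family dominated elementwise by an orthogonal family of sharp
elements has an orthosum. -/
def SharplyOrthocomplete : Prop :=
  ∀ (ι : Type u) (x w : ι → E), (∀ k, A.Sharp (w k)) → A.Orthogonal w →
    (∀ k, A.le (x k) (w k)) → ∃ v, A.HasOrthoSum x v

/-- `c` is central: for every `y` the meets `y ∧ c`, `y ∧ c'` exist and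
`y = (y ∧ c) ∨ (y ∧ c')`. -/
def Central (c : E) : Prop :=
  ∀ y : E, ∃ m₁ m₂, A.IsInfIn Set.univ {y, c} m₁ ∧
    A.IsInfIn Set.univ {y, A.compl c} m₂ ∧ A.IsSupIn Set.univ {m₁, m₂} y

/-- The center `C(E)`. -/
def centerSet : Set E := {c | A.Central c}

def CentrallyDominating : Prop :=
  ∀ x : E, ∃ c, A.Central c ∧ A.le x c ∧
    A.IsInfIn Set.univ {d | A.Central d ∧ A.le x d} c ∧
    A.IsInfIn A.centerSet {d | A.Central d ∧ A.le x d} c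

def CentrallyOrthocomplete : Prop :=
  ∀ (ι : Type u) (x c : ι → E), (∀ k, A.Central (c k)) → A.Orthogonal c →
    (∀ k, A.le (x k) (c k)) → ∃ v, A.HasOrthoSum x v

/-- `P` is bifull in `E`: for `S ⊆ P`, the join of `S` in `P` exists iff the join
of `S` in `E` exists, and then they coincide. -/
def Bifull (P : Set E) : Prop :=
  ∀ S ⊆ P, (∀ s, A.IsSupIn P S s → A.IsSupIn Set.univ S s) ∧
    (∀ s, A.IsSupIn Set.univ S s → A.IsSupIn P S s)

/-- The subposet `P` is a complete lattice: every subset of `P` has a supremum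
(and an infimum) computed within `P`. -/
def CompleteIn (P : Set E) : Prop :=
  ∀ S ⊆ P, (∃ s, A.IsSupIn P S s) ∧ (∃ m, A.IsInfIn P S m)

/-- `E` is a complete lattice. -/
def Complete : Prop :=
  ∀ S : Set E, (∃ s, A.IsSupIn Set.univ S s) ∧ (∃ m, A.IsInfIn Set.univ S m)

/-- The induced order of `E` is a lattice. -/
def LatticeOrdered : Prop := ∀ x y : E, A.HasMeet x y ∧ A.HasJoin x y

/-- `x ↔ y` : `x ∨ y = x ⊕ (y ⊖ (x ∧ y))`. -/
def Compatible (x y : E) : Prop :=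
  ∃ m j z, A.IsInfIn Set.univ {x, y} m ∧ A.IsSupIn Set.univ {x, y} j ∧
    A.D m z ∧ A.oplus m z = y ∧ A.D x z ∧ A.oplus x z = j

/-- An MV-effect algebra: a lattice effect algebra all of whose pairs of elements
are compatible. -/
def MV : Prop := A.LatticeOrdered ∧ ∀ x y : E, A.Compatible x y

/-- `nx = x ⊕ ⋯ ⊕ x` (`n` times) is defined. -/
def nTimesDef (n : ℕ) (x : E) : Prop := ∃ s, A.SumDef (List.replicate n x) s

/-- `ord x < ∞` for every nonzero `x`. -/
def IsArchimedean : Prop := ∀ x : E, x ≠ A.zero → ∃ n : ℕ, ¬ A.nTimesDef n x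

def Atom (a : E) : Prop := a ≠ A.zero ∧ ∀ b, A.le b a → b = A.zero ∨ b = a

def Atomic : Prop := ∀ x : E, x ≠ A.zero → ∃ a, A.Atom a ∧ A.le a x

/-- The subposet `P` (closed under `'`) is an orthomodular lattice. -/
def OrthomodularIn (P : Set E) : Prop :=
  (∀ x ∈ P, ∀ y ∈ P, (∃ m, A.IsInfIn P {x, y} m) ∧ (∃ j, A.IsSupIn P {x, y} j)) ∧
  A.zero ∈ P ∧ A.one ∈ P ∧ (∀ x ∈ P, A.compl x ∈ P) ∧
  (∀ x ∈ P, A.IsInfIn P {x, A.compl x} A.zero ∧ A.IsSupIn P {x, A.compl x} A.one) ∧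
  (∀ x ∈ P, ∀ y ∈ P, A.le x y →
    ∃ m, A.IsInfIn P {y, A.compl x} m ∧ A.IsSupIn P {x, m} y)

def DistributiveIn (P : Set E) : Prop :=
  ∀ x ∈ P, ∀ y ∈ P, ∀ z ∈ P, ∀ jyz mxy mxz m : E,
    A.IsSupIn P {y, z} jyz → A.IsInfIn P {x, y} mxy → A.IsInfIn P {x, z} mxz →
    A.IsInfIn P {x, jyz} m → A.IsSupIn P {mxy, mxz} m

/-- The subposet `P` is a Boolean algebra (complemented distributive lattice with
bounds, complement given by `'`). -/
def BooleanIn (P : Set E) : Prop :=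
  (∀ x ∈ P, ∀ y ∈ P, (∃ m, A.IsInfIn P {x, y} m) ∧ (∃ j, A.IsSupIn P {x, y} j)) ∧
  A.zero ∈ P ∧ A.one ∈ P ∧ (∀ x ∈ P, A.compl x ∈ P) ∧
  (∀ x ∈ P, A.IsInfIn P {x, A.compl x} A.zero ∧ A.IsSupIn P {x, A.compl x} A.one) ∧
  A.DistributiveIn P

/-- A block: a maximal set of pairwise compatible elements. -/
def Block (M : Set E) : Prop :=
  (∀ x ∈ M, ∀ y ∈ M, A.Compatible x y) ∧
  ∀ N : Set E, M ⊆ N → (∀ x ∈ N, ∀ y ∈ N, A.Compatible x y) → N = M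

def AtomIn (M : Set E) (a : E) : Prop :=
  a ∈ M ∧ a ≠ A.zero ∧ ∀ b ∈ M, A.le b a → b = A.zero ∨ b = a

def AtomicIn (M : Set E) : Prop :=
  ∀ x ∈ M, x ≠ A.zero → ∃ a, A.AtomIn M a ∧ A.le a x

end EffectAlgebra

/-!
Everything rests on the fact that every set `S` of sharp elements has a supremum in `E`.
By Zorn's lemma choose a maximal set `O` of pairwise orthogonal sharp elements each lying below
every upper bound of `S`. A finite orthosum of pairwise orthogonal sharp elements is their join,
so the orthosum `v` of `O` given by sharp orthocompleteness is `⋁ O`, and `v` is sharp.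
For `t ∈ S` the element `(t ∨ v) ∧ v'` can be added to `O`, so by maximality it lies below both
`v` and `v'`; it is therefore `0`, and the orthomodular law `t ∨ v = v ⊕ ((t ∨ v) ∧ v')` gives
`t ≤ v`. Infima are suprema of complements, and a supremum of central elements is central, which
yields both kinds of domination.
-/

namespace EffectAlgebra

variable {E : Type u} {A : EffectAlgebra E}

section Basic

lemma compl_compl (x : E) : A.compl (A.compl x) = x :=
  (A.compl_unique _ _ (A.D_comm _ _ (A.D_compl x))
    (by rw [A.oplus_comm _ _ (A.D_comm _ _ (A.D_compl x)), A.oplus_compl])).symm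

lemma compl_one : A.compl A.one = A.zero :=
  A.one_max _ (A.D_compl A.one)

lemma compl_zero : A.compl A.zero = A.one := by
  rw [← compl_one (A := A), compl_compl]

lemma D_zero_and_oplus_zero (y : E) : A.D y A.zero ∧ A.oplus y A.zero = y := by
  obtain ⟨hD, hD', he⟩ := A.assoc (A.compl y) (A.compl (A.compl y)) A.zero (A.D_compl _)
    (by rw [A.oplus_compl, ← compl_one]; exact A.D_compl _)
  have h := A.compl_unique _ _ hD' (by rw [← he, A.oplus_compl, ← compl_one, A.oplus_compl])
  rw [compl_compl] at hD h
  exact ⟨hD, h⟩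

lemma D_zero (y : E) : A.D y A.zero := (D_zero_and_oplus_zero y).1

lemma oplus_zero (y : E) : A.oplus y A.zero = y := (D_zero_and_oplus_zero y).2

lemma oplus_compl_oplus {a x : E} (h : A.D a x) :
    A.D a (A.compl (A.oplus a x)) ∧ A.oplus a (A.compl (A.oplus a x)) = A.compl x := by
  have hxa := A.D_comm _ _ h
  obtain ⟨hD, hD', he⟩ := A.assoc x a _ hxa
    (by rw [A.oplus_comm _ _ hxa]; exact A.D_compl _)
  exact ⟨hD, A.compl_unique _ _ hD' (by rw [← he, A.oplus_comm _ _ hxa, A.oplus_compl])⟩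

lemma cancel_left {a b c : E} (hb : A.D a b) (hc : A.D a c)
    (h : A.oplus a b = A.oplus a c) : b = c := by
  rw [← compl_compl b, ← compl_compl c, ← (oplus_compl_oplus hb).2,
    ← (oplus_compl_oplus hc).2, h]

lemma eq_zero_of_oplus_eq_zero {a b : E} (h : A.D a b) (e : A.oplus a b = A.zero) :
    a = A.zero := by
  have hD : A.D (A.oplus b a) A.one := by
    rw [← A.oplus_comm _ _ h, e, ← compl_zero]; exact A.D_compl _
  exact A.one_max a (A.D_comm _ _ (A.assoc b a A.one (A.D_comm _ _ h) hD).1)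

lemma le_refl (x : E) : A.le x x := ⟨A.zero, D_zero x, oplus_zero x⟩

lemma zero_le (x : E) : A.le A.zero x :=
  ⟨x, A.D_comm _ _ (D_zero x), by rw [← A.oplus_comm _ _ (D_zero x), oplus_zero]⟩

lemma le_one (x : E) : A.le x A.one := ⟨A.compl x, A.D_compl x, A.oplus_compl x⟩

lemma le_trans {x y z : E} (h₁ : A.le x y) (h₂ : A.le y z) : A.le x z := by
  obtain ⟨a, ha, rfl⟩ := h₁
  obtain ⟨b, hb, rfl⟩ := h₂
  obtain ⟨-, hxab, he⟩ := A.assoc x a b ha hb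
  exact ⟨A.oplus a b, hxab, he.symm⟩

lemma le_antisymm {x y : E} (h₁ : A.le x y) (h₂ : A.le y x) : x = y := by
  obtain ⟨a, ha, rfl⟩ := h₁
  obtain ⟨b, hb, he⟩ := h₂
  obtain ⟨hab, hxab, he'⟩ := A.assoc x a b ha hb
  have hab0 : A.oplus a b = A.zero :=
    cancel_left hxab (D_zero x) (by rw [← he', he, oplus_zero])
  rw [eq_zero_of_oplus_eq_zero hab hab0, oplus_zero]

lemma le_zero_iff {x : E} : A.le x A.zero ↔ x = A.zero :=
  ⟨fun h => le_antisymm h (zero_le x), fun h => h ▸ le_refl _⟩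

lemma le_oplus_left {a b : E} (h : A.D a b) : A.le a (A.oplus a b) := ⟨b, h, rfl⟩

lemma le_oplus_right {a b : E} (h : A.D a b) : A.le b (A.oplus a b) :=
  ⟨a, A.D_comm _ _ h, A.oplus_comm _ _ (A.D_comm _ _ h)⟩

lemma le_compl_of_D {a b : E} (h : A.D a b) : A.le a (A.compl b) :=
  ⟨_, oplus_compl_oplus h⟩

lemma D_of_le_compl {a b : E} (h : A.le a (A.compl b)) : A.D a b := by
  obtain ⟨z, hz, he⟩ := h
  exact A.D_comm _ _ (A.assoc' b a z hz (by rw [he]; exact A.D_compl b)).1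

lemma le_compl_comm {a b : E} : A.le a (A.compl b) ↔ A.le b (A.compl a) :=
  ⟨fun h => le_compl_of_D (A.D_comm _ _ (D_of_le_compl h)),
    fun h => le_compl_of_D (A.D_comm _ _ (D_of_le_compl h))⟩

lemma compl_antitone {a b : E} (h : A.le a b) : A.le (A.compl b) (A.compl a) := by
  obtain ⟨d, hd, rfl⟩ := h
  rw [A.oplus_comm _ _ hd, le_compl_comm, compl_compl]
  exact le_oplus_right (A.D_comm _ _ hd)

lemma compl_le_compl_iff {a b : E} : A.le (A.compl a) (A.compl b) ↔ A.le b a :=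
  ⟨fun h => by simpa only [compl_compl] using compl_antitone h, compl_antitone⟩

lemma le_of_oplus_le_oplus_left {a b c : E} (ha : A.D c a) (hb : A.D c b)
    (h : A.le (A.oplus c a) (A.oplus c b)) : A.le a b := by
  obtain ⟨d, hd, he⟩ := h
  obtain ⟨had, hcad, he'⟩ := A.assoc c a d ha hd
  exact ⟨d, had, cancel_left hcad hb (he'.symm.trans he)⟩

lemma le_of_oplus_eq_oplus {x x' z z' : E} (hx : A.D x x') (hz : A.D z z')
    (h : A.oplus x x' = A.oplus z z') (hxz : A.le x z) : A.le z' x' := by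
  obtain ⟨e, hxe, rfl⟩ := hxz
  obtain ⟨hez, hxez, he⟩ := A.assoc x e z' hxe hz
  rw [cancel_left hx hxez (h.trans he)]
  exact le_oplus_right hez

end Basic

section Lattice

lemma isLB_pair {x y z : E} : A.IsLB {x, y} z ↔ A.le z x ∧ A.le z y := by
  simp [IsLB]

lemma isUB_pair {x y z : E} : A.IsUB {x, y} z ↔ A.le x z ∧ A.le y z := by
  simp [IsUB]

lemma isInfIn_pair {x y m : E} (hx : A.le m x) (hy : A.le m y)
    (h : ∀ z, A.le z x → A.le z y → A.le z m) : A.IsInfIn Set.univ {x, y} m :=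
  ⟨trivial, isLB_pair.2 ⟨hx, hy⟩, fun z _ hz => h z (isLB_pair.1 hz).1 (isLB_pair.1 hz).2⟩

lemma isInfIn_unique {S : Set E} {m m' : E} (h : A.IsInfIn Set.univ S m)
    (h' : A.IsInfIn Set.univ S m') : m = m' :=
  le_antisymm (h'.2.2 m trivial h.2.1) (h.2.2 m' trivial h'.2.1)

lemma isSupIn_unique {S : Set E} {m m' : E} (h : A.IsSupIn Set.univ S m)
    (h' : A.IsSupIn Set.univ S m') : m = m' :=
  le_antisymm (h.2.2 m' trivial h'.2.1) (h'.2.2 m trivial h.2.1)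

lemma IsInfIn.restrict {P S : Set E} {m : E} (h : A.IsInfIn Set.univ S m) (hm : m ∈ P) :
    A.IsInfIn P S m :=
  ⟨hm, h.2.1, fun z _ hz => h.2.2 z trivial hz⟩

lemma IsSupIn.restrict {P S : Set E} {m : E} (h : A.IsSupIn Set.univ S m) (hm : m ∈ P) :
    A.IsSupIn P S m :=
  ⟨hm, h.2.1, fun z _ hz => h.2.2 z trivial hz⟩

lemma isInfIn_compl_image_iff {S : Set E} {m : E} :
    A.IsInfIn Set.univ (A.compl '' S) m ↔ A.IsSupIn Set.univ S (A.compl m) := by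
  have hLB : ∀ z, A.IsLB (A.compl '' S) z ↔ A.IsUB S (A.compl z) := fun z => by
    simp only [IsLB, IsUB, Set.forall_mem_image]
    exact forall₂_congr fun _ _ => le_compl_comm
  constructor
  · rintro ⟨-, hm, hgr⟩
    refine ⟨trivial, (hLB m).1 hm, fun z _ hz => ?_⟩
    rw [← compl_le_compl_iff, compl_compl]
    exact hgr _ trivial ((hLB _).2 (by rwa [compl_compl]))
  · rintro ⟨-, hm, hgr⟩
    exact ⟨trivial, (hLB m).2 hm,
      fun z _ hz => compl_le_compl_iff.1 (hgr _ trivial ((hLB z).1 hz))⟩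

lemma isSupIn_compl_image_iff {S : Set E} {m : E} :
    A.IsSupIn Set.univ (A.compl '' S) (A.compl m) ↔ A.IsInfIn Set.univ S m := by
  have h := isInfIn_compl_image_iff (A := A) (S := A.compl '' S) (m := m)
  simp only [Set.image_image, compl_compl, Set.image_id'] at h
  exact h.symm

noncomputable def meet (hL : A.LatticeOrdered) (x y : E) : E := (hL x y).1.choose

noncomputable def join (hL : A.LatticeOrdered) (x y : E) : E := (hL x y).2.choose

variable (hL : A.LatticeOrdered)

lemma meet_spec (x y : E) : A.IsInfIn Set.univ {x, y} (meet hL x y) :=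
  (hL x y).1.choose_spec

lemma join_spec (x y : E) : A.IsSupIn Set.univ {x, y} (join hL x y) :=
  (hL x y).2.choose_spec

lemma meet_le_left (x y : E) : A.le (meet hL x y) x := (isLB_pair.1 (meet_spec hL x y).2.1).1

lemma meet_le_right (x y : E) : A.le (meet hL x y) y := (isLB_pair.1 (meet_spec hL x y).2.1).2

lemma le_meet {x y z : E} (hx : A.le z x) (hy : A.le z y) : A.le z (meet hL x y) :=
  (meet_spec hL x y).2.2 z trivial (isLB_pair.2 ⟨hx, hy⟩)

lemma le_join_left (x y : E) : A.le x (join hL x y) := (isUB_pair.1 (join_spec hL x y).2.1).1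

lemma le_join_right (x y : E) : A.le y (join hL x y) := (isUB_pair.1 (join_spec hL x y).2.1).2

lemma join_le {x y z : E} (hx : A.le x z) (hy : A.le y z) : A.le (join hL x y) z :=
  (join_spec hL x y).2.2 z trivial (isUB_pair.2 ⟨hx, hy⟩)

lemma meet_eq {x y m : E} (h : A.IsInfIn Set.univ {x, y} m) : meet hL x y = m :=
  isInfIn_unique (meet_spec hL x y) h

lemma join_eq {x y m : E} (h : A.IsSupIn Set.univ {x, y} m) : join hL x y = m :=
  isSupIn_unique (join_spec hL x y) h

end Lattice

section Sharp

lemma sharp_iff {w : E} :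
    A.Sharp w ↔ ∀ z, A.le z w → A.le z (A.compl w) → z = A.zero :=
  ⟨fun h z hw hw' => le_zero_iff.1 (h.2.2 z trivial (isLB_pair.2 ⟨hw, hw'⟩)),
    fun h => isInfIn_pair (zero_le w) (zero_le _) fun z hw hw' => le_zero_iff.2 (h z hw hw')⟩

lemma sharp_iff_isSupIn {w : E} : A.Sharp w ↔ A.IsSupIn Set.univ {w, A.compl w} A.one := by
  rw [← compl_zero, ← isInfIn_compl_image_iff, Set.image_pair, compl_compl,
    Set.pair_comm (A.compl w) w]
  rfl

lemma sharp_zero : A.Sharp A.zero :=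
  sharp_iff.2 fun _ h _ => le_zero_iff.1 h

lemma sharp_one : A.Sharp A.one :=
  sharp_iff.2 fun _ _ h => le_zero_iff.1 (compl_one (A := A) ▸ h)

lemma Sharp.compl {w : E} (h : A.Sharp w) : A.Sharp (A.compl w) :=
  sharp_iff.2 fun z h₁ h₂ => sharp_iff.1 h z (by rwa [compl_compl] at h₂) h₁

variable (hL : A.LatticeOrdered)

lemma oplus_eq_join_of_le_sharp {w a b : E} (hw : A.Sharp w) (ha : A.le a w)
    (hb : A.le b (A.compl w)) : A.D a b ∧ A.oplus a b = join hL a b := by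
  have hab : A.D a b := D_of_le_compl (le_trans ha (le_compl_comm.1 hb))
  obtain ⟨t, hjt, he⟩ := join_le hL (le_oplus_left hab) (le_oplus_right hab)
  have hta : A.le t a := le_of_oplus_eq_oplus (A.D_comm _ _ hab) hjt
    (by rw [← A.oplus_comm _ _ hab, he]) (le_join_right hL a b)
  have htb : A.le t b := le_of_oplus_eq_oplus hab hjt he.symm (le_join_left hL a b)
  have ht : t = A.zero := sharp_iff.1 hw t (le_trans hta ha) (le_trans htb hb)
  exact ⟨hab, by rw [← he, ht, oplus_zero]⟩

lemma sharp_of_isSupIn (hL : A.LatticeOrdered) {S : Set E} {j : E} (hS : ∀ a ∈ S, A.Sharp a)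
    (hj : A.IsSupIn Set.univ S j) : A.Sharp j := by
  refine sharp_iff.2 fun u hu hu' => ?_
  obtain ⟨t, hut, rfl⟩ := hu
  have hat : ∀ a ∈ S, A.le a t := fun a ha => by
    have haj := hj.2.1 a ha
    obtain ⟨hau, he⟩ := oplus_eq_join_of_le_sharp hL (hS a ha) (le_refl a)
      (le_trans hu' (compl_antitone haj))
    refine le_of_oplus_le_oplus_left (A.D_comm _ _ hau) hut ?_
    rw [← A.oplus_comm _ _ hau, he]
    exact join_le hL haj (le_oplus_left hut)
  have htj : t = A.oplus u t := le_antisymm (le_oplus_right hut) (hj.2.2 t trivial hat)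
  exact cancel_left (A.D_comm _ _ hut) (D_zero t)
    (by rw [← A.oplus_comm _ _ hut, ← htj, oplus_zero])


lemma join_sharp {a b : E} (ha : A.Sharp a) (hb : A.Sharp b) : A.Sharp (join hL a b) :=
  sharp_of_isSupIn hL (by rintro x (rfl | rfl) <;> assumption) (join_spec hL a b)

lemma compl_meet (a b : E) : A.compl (meet hL a b) = join hL (A.compl a) (A.compl b) := by
  have h : A.IsInfIn Set.univ (A.compl '' {A.compl a, A.compl b}) (meet hL a b) := by
    rw [Set.image_pair, compl_compl, compl_compl]
    exact meet_spec hL a b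
  exact (join_eq hL (isInfIn_compl_image_iff.1 h)).symm

lemma meet_sharp {a b : E} (ha : A.Sharp a) (hb : A.Sharp b) : A.Sharp (meet hL a b) := by
  rw [← compl_compl (meet hL a b), compl_meet]
  exact (join_sharp hL ha.compl hb.compl).compl

lemma Sharp.oplus_meet_compl {w y : E} (hw : A.Sharp w) (h : A.le w y) :
    A.D w (meet hL y (A.compl w)) ∧ A.oplus w (meet hL y (A.compl w)) = y := by
  obtain ⟨t, hwt, rfl⟩ := h
  have htm : A.le t (meet hL (A.oplus w t) (A.compl w)) :=
    le_meet hL (le_oplus_right hwt) (le_compl_of_D (A.D_comm _ _ hwt))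
  obtain ⟨hwm, he⟩ := oplus_eq_join_of_le_sharp hL hw (le_refl w) (meet_le_right hL _ _)
  have hmt : A.le (meet hL (A.oplus w t) (A.compl w)) t :=
    le_of_oplus_le_oplus_left hwm hwt
      (by rw [he]; exact join_le hL (le_oplus_left hwt) (meet_le_left hL _ _))
  rw [le_antisymm hmt htm]
  exact ⟨hwt, rfl⟩

end Sharp

section OrthogonalSums

lemma SumDef.isSupIn_of_sharp (hL : A.LatticeOrdered) {l : List E} {s : E} (h : A.SumDef l s)
    (hl : ∀ x ∈ l, A.Sharp x) : A.IsSupIn Set.univ {x | x ∈ l} s := by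
  induction h with
  | nil => exact ⟨trivial, fun _ hx => absurd hx List.not_mem_nil, fun z _ _ => zero_le z⟩
  | @cons x l s _ hxs ih =>
    have hsup := ih fun y hy => hl y (List.mem_cons_of_mem _ hy)
    rw [(oplus_eq_join_of_le_sharp hL (hl x List.mem_cons_self) (le_refl x)
      (le_compl_of_D (A.D_comm _ _ hxs))).2]
    refine ⟨trivial, fun y hy => ?_, fun z _ hz => join_le hL (hz x List.mem_cons_self)
      (hsup.2.2 z trivial fun y hy => hz y (List.mem_cons_of_mem _ hy))⟩
    rcases List.mem_cons.1 hy with rfl | hy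
    · exact le_join_left hL _ _
    · exact le_trans (hsup.2.1 y hy) (le_join_right hL _ _)

lemma exists_sumDef_of_pairwise (hL : A.LatticeOrdered) {l : List E} (hl : ∀ x ∈ l, A.Sharp x)
    (hp : l.Pairwise A.D) : ∃ s, A.SumDef l s := by
  induction l with
  | nil => exact ⟨_, SumDef.nil⟩
  | cons x l ih =>
    obtain ⟨hx, hp⟩ := List.pairwise_cons.1 hp
    have hl' : ∀ y ∈ l, A.Sharp y := fun y hy => hl y (List.mem_cons_of_mem _ hy)
    obtain ⟨s, hs⟩ := ih hl' hp
    have hsx : A.le s (A.compl x) := (hs.isSupIn_of_sharp hL hl').2.2 _ trivial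
      fun y hy => le_compl_of_D (A.D_comm _ _ (hx y hy))
    exact ⟨_, hs.cons (A.D_comm _ _ (D_of_le_compl hsx))⟩

theorem exists_isSupIn_of_pairwise_sharp (hL : A.LatticeOrdered) (hSO : A.SharplyOrthocomplete)
    {O : Set E} (hO : O ⊆ A.sharpSet) (hD : O.Pairwise A.D) : ∃ v, A.IsSupIn Set.univ O v := by
  have hmem : ∀ l : List O, ∀ x ∈ l.map Subtype.val, x ∈ O := fun l x hx => by
    obtain ⟨k, -, rfl⟩ := List.mem_map.1 hx
    exact k.2
  have horth : A.Orthogonal (Subtype.val : O → E) := fun l hl =>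
    exists_sumDef_of_pairwise hL (fun x hx => hO (hmem l x hx)) (List.pairwise_map.2
      (hl.pairwise_of_forall_ne fun a _ b _ hab => hD a.2 b.2 (Subtype.coe_ne_coe.2 hab)))
  obtain ⟨v, -, hv⟩ := hSO O Subtype.val Subtype.val (fun k => hO k.2) horth fun k => le_refl _
  refine ⟨v, trivial, fun x hx => hv.2.1 x ⟨[⟨x, hx⟩], List.nodup_singleton _, ?_⟩,
    fun u _ hu => hv.2.2 u trivial ?_⟩
  · simpa only [List.map, oplus_zero] using (SumDef.nil (A := A)).cons (D_zero x)
  · rintro s ⟨l, -, hs⟩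
    exact (hs.isSupIn_of_sharp hL fun x hx => hO (hmem l x hx)).2.2 u trivial
      fun x hx => hu x (hmem l x hx)

theorem exists_isSupIn_of_subset_sharpSet (hL : A.LatticeOrdered)
    (hSO : A.SharplyOrthocomplete) {S : Set E} (hS : S ⊆ A.sharpSet) :
    ∃ j, A.IsSupIn Set.univ S j := by
  obtain ⟨O, hmax⟩ := zorn_subset
    {O : Set E | O ⊆ A.sharpSet ∧ O.Pairwise A.D ∧ ∀ x ∈ O, ∀ u, A.IsUB S u → A.le x u}
    fun c hc hchain => ⟨⋃₀ c, ⟨Set.sUnion_subset fun O hO => (hc hO).1,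
      (Set.pairwise_sUnion hchain.directedOn).2 fun O hO => (hc hO).2.1,
      fun x ⟨O, hO, hx⟩ => (hc hO).2.2 x hx⟩, fun _ => Set.subset_sUnion_of_mem⟩
  obtain ⟨hOs, hOD, hOub⟩ := hmax.prop
  obtain ⟨v, hv⟩ := exists_isSupIn_of_pairwise_sharp hL hSO hOs hOD
  have hvs : A.Sharp v := sharp_of_isSupIn hL (fun x hx => hOs hx) hv
  have hvu : ∀ u, A.IsUB S u → A.le v u := fun u hu =>
    hv.2.2 u trivial fun x hx => hOub x hx u hu
  refine ⟨v, trivial, fun t ht => ?_, fun u _ => hvu u⟩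
  obtain ⟨-, he⟩ := hvs.oplus_meet_compl hL (le_join_right hL t v)
  set d := meet hL (join hL t v) (A.compl v)
  have hdO : ∀ b ∈ O, A.D d b := fun b hb =>
    D_of_le_compl (le_trans (meet_le_right hL _ _) (compl_antitone (hv.2.1 b hb)))
  have hd : d ∈ O := hmax.mem_of_prop_insert
    ⟨Set.insert_subset (meet_sharp hL (join_sharp hL (hS ht) hvs) hvs.compl) hOs,
      Set.pairwise_insert.2 ⟨hOD, fun b hb _ => ⟨hdO b hb, A.D_comm _ _ (hdO b hb)⟩⟩,
      Set.forall_mem_insert.2 ⟨fun u hu => le_trans (meet_le_left hL _ _)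
        (join_le hL (hu t ht) (hvu u hu)), hOub⟩⟩
  rw [sharp_iff.1 hvs d (hv.2.1 d hd) (meet_le_right hL _ _), oplus_zero] at he
  exact he ▸ le_join_left hL t v

theorem exists_sharp_isInfIn (hL : A.LatticeOrdered) (hSO : A.SharplyOrthocomplete)
    {S : Set E} (hS : S ⊆ A.sharpSet) : ∃ m, A.Sharp m ∧ A.IsInfIn Set.univ S m := by
  have hS' : ∀ x ∈ A.compl '' S, A.Sharp x := by
    rintro _ ⟨x, hx, rfl⟩
    exact Sharp.compl (hS hx)
  obtain ⟨j, hj⟩ := exists_isSupIn_of_subset_sharpSet hL hSO hS'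
  exact ⟨A.compl j, (sharp_of_isSupIn hL hS' hj).compl,
    isSupIn_compl_image_iff.1 (by rwa [compl_compl])⟩

end OrthogonalSums

section Central

lemma Central.compl {c : E} (h : A.Central c) : A.Central (A.compl c) := by
  intro y
  obtain ⟨m₁, m₂, h₁, h₂, hsup⟩ := h y
  exact ⟨m₂, m₁, h₂, by rwa [compl_compl], by rwa [Set.pair_comm]⟩

lemma Central.sharp {c : E} (h : A.Central c) : A.Sharp c := by
  obtain ⟨m₁, m₂, h₁, h₂, hsup⟩ := h A.one
  have hone : ∀ x, A.IsInfIn Set.univ {A.one, x} x := fun x =>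
    isInfIn_pair (le_one x) (le_refl x) fun _ _ h => h
  rw [isInfIn_unique h₁ (hone c), isInfIn_unique h₂ (hone _)] at hsup
  exact sharp_iff_isSupIn.2 hsup

variable (hL : A.LatticeOrdered)

lemma Central.oplus_meet {c : E} (h : A.Central c) (y : E) :
    A.D (meet hL y c) (meet hL y (A.compl c)) ∧
      A.oplus (meet hL y c) (meet hL y (A.compl c)) = y := by
  obtain ⟨m₁, m₂, h₁, h₂, hsup⟩ := h y
  rw [meet_eq hL h₁, meet_eq hL h₂, ← join_eq hL hsup]
  exact oplus_eq_join_of_le_sharp hL h.sharp (isLB_pair.1 h₁.2.1).2 (isLB_pair.1 h₂.2.1).2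

lemma central_of_sharp {w : E} (hw : A.Sharp w)
    (h : ∀ y t, A.D (meet hL y w) t → A.oplus (meet hL y w) t = y → A.le t (A.compl w)) :
    A.Central w := by
  intro y
  obtain ⟨t, hat, hy⟩ := meet_le_left hL y w
  have htb : A.le t (meet hL y (A.compl w)) := le_meet hL (hy ▸ le_oplus_right hat) (h y t hat hy)
  obtain ⟨hab, he⟩ :=
    oplus_eq_join_of_le_sharp hL hw (meet_le_right hL y w) (meet_le_right hL y (A.compl w))
  have hbt : A.le (meet hL y (A.compl w)) t := le_of_oplus_le_oplus_left hab hat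
    (by rw [he, hy]; exact join_le hL (meet_le_left hL _ _) (meet_le_left hL _ _))
  have hy' : A.oplus (meet hL y w) (meet hL y (A.compl w)) = y := by
    rw [le_antisymm hbt htb, hy]
  have hsup := join_spec hL (meet hL y w) (meet hL y (A.compl w))
  rw [← he, hy'] at hsup
  exact ⟨_, _, meet_spec hL y w, meet_spec hL y (A.compl w), hsup⟩

lemma central_of_isSupIn (hL : A.LatticeOrdered) {S : Set E} {j : E} (hS : ∀ c ∈ S, A.Central c)
    (hj : A.IsSupIn Set.univ S j) : A.Central j := by
  refine central_of_sharp hL (sharp_of_isSupIn hL (fun c hc => (hS c hc).sharp) hj)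
    fun y t hat hy => ?_
  rw [le_compl_comm]
  refine hj.2.2 _ trivial fun c hc => le_compl_comm.1 ?_
  obtain ⟨hD, he⟩ := (hS c hc).oplus_meet hL y
  have hcj : A.le (meet hL y c) (meet hL y j) :=
    le_meet hL (meet_le_left hL y c) (le_trans (meet_le_right hL y c) (hj.2.1 c hc))
  exact le_trans (le_of_oplus_eq_oplus hD hat (he.trans hy.symm) hcj) (meet_le_right hL _ _)

lemma central_of_isInfIn (hL : A.LatticeOrdered) {S : Set E} {m : E} (hS : ∀ c ∈ S, A.Central c)
    (hm : A.IsInfIn Set.univ S m) : A.Central m := by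
  have hS' : ∀ c ∈ A.compl '' S, A.Central c := by
    rintro _ ⟨c, hc, rfl⟩
    exact (hS c hc).compl
  rw [← compl_compl m]
  exact (central_of_isSupIn hL hS' (isSupIn_compl_image_iff.2 hm)).compl

end Central

section SharplyOrthocomplete

theorem sharplyDominating (hL : A.LatticeOrdered) (hSO : A.SharplyOrthocomplete) :
    A.SharplyDominating := by
  intro x
  obtain ⟨w, hw, hinf⟩ := exists_sharp_isInfIn hL hSO (S := {v | A.Sharp v ∧ A.le x v})
    fun v hv => hv.1
  exact ⟨w, hw, hinf.2.2 x trivial fun v hv => hv.2, hinf, hinf.restrict hw⟩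

theorem centrallyDominating (hL : A.LatticeOrdered) (hSO : A.SharplyOrthocomplete) :
    A.CentrallyDominating := by
  intro x
  obtain ⟨c, -, hinf⟩ := exists_sharp_isInfIn hL hSO (S := {d | A.Central d ∧ A.le x d})
    fun d hd => hd.1.sharp
  have hc : A.Central c := central_of_isInfIn hL (fun d hd => hd.1) hinf
  exact ⟨c, hc, hinf.2.2 x trivial fun d hd => hd.2, hinf, hinf.restrict hc⟩

theorem completeIn_sharpSet (hL : A.LatticeOrdered) (hSO : A.SharplyOrthocomplete) :
    A.CompleteIn A.sharpSet := by
  intro S hS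
  obtain ⟨j, hj⟩ := exists_isSupIn_of_subset_sharpSet hL hSO hS
  obtain ⟨m, hm, hinf⟩ := exists_sharp_isInfIn hL hSO hS
  exact ⟨⟨j, hj.restrict (sharp_of_isSupIn hL (fun a ha => hS ha) hj)⟩,
    ⟨m, hinf.restrict hm⟩⟩

theorem orthomodularIn_sharpSet (hL : A.LatticeOrdered) : A.OrthomodularIn A.sharpSet := by
  refine ⟨fun x hx y hy => ⟨⟨_, (meet_spec hL x y).restrict (meet_sharp hL hx hy)⟩,
      ⟨_, (join_spec hL x y).restrict (join_sharp hL hx hy)⟩⟩,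
    sharp_zero, sharp_one, fun x hx => Sharp.compl hx,
    fun x hx => ⟨IsInfIn.restrict hx sharp_zero, (sharp_iff_isSupIn.1 hx).restrict sharp_one⟩,
    fun x hx y hy hxy =>
      ⟨_, (meet_spec hL y (A.compl x)).restrict (meet_sharp hL hy (Sharp.compl hx)), ?_⟩⟩
  have h := join_spec hL x (meet hL y (A.compl x))
  rw [← (oplus_eq_join_of_le_sharp hL hx (le_refl x) (meet_le_right hL _ _)).2,
    (Sharp.oplus_meet_compl hL hx hxy).2] at h
  exact h.restrict hy

theorem bifull_sharpSet (hL : A.LatticeOrdered) (hSO : A.SharplyOrthocomplete) :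
    A.Bifull A.sharpSet := by
  intro S hS
  obtain ⟨j, hj⟩ := exists_isSupIn_of_subset_sharpSet hL hSO hS
  have hjs : A.Sharp j := sharp_of_isSupIn hL (fun a ha => hS ha) hj
  refine ⟨fun s hs => ?_, fun s hs => isSupIn_unique hj hs ▸ hj.restrict hjs⟩
  rw [le_antisymm (hs.2.2 j hjs hj.2.1) (hj.2.2 s trivial hs.2.1)]
  exact hj

end SharplyOrthocomplete

end EffectAlgebra

/-- A sharply orthocomplete lattice effect algebra is sharply dominating (hence
S-dominating and centrally dominating) and `S(E)` is a complete orthomodular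
lattice bifull in `E`. -/
theorem stmt17 {E : Type u} (A : EffectAlgebra E) (hL : A.LatticeOrdered)
    (hSO : A.SharplyOrthocomplete) :
    A.SharplyDominating ∧ A.SDominating ∧ A.CentrallyDominating ∧
      A.CompleteIn A.sharpSet ∧ A.OrthomodularIn A.sharpSet ∧
      A.Bifull A.sharpSet := by
  have hSD := EffectAlgebra.sharplyDominating hL hSO
  exact ⟨hSD, ⟨hSD, fun x w _ => (hL x w).1⟩, EffectAlgebra.centrallyDominating hL hSO,
    EffectAlgebra.completeIn_sharpSet hL hSO, EffectAlgebra.orthomodularIn_sharpSet hL,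
    EffectAlgebra.bifull_sharpSet hL hSO⟩
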